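/- arXiv:2001.07403 — 4 statements merged into one kernel-verified Lean document; each statement's English description precedes it below -/
import Mathlib

section
/- If F ∈ K[r₁,…,r_m] is μ-symmetric with μ-gist F̊ ∈ K[z₁,…,z_n], and P(x) = Σ_{i=0}^n c_i x^{n-i} ∈ K[x] has m distinct roots ρ₁,…,ρ_m with multiplicities μ₁,…,μ_m, then F(ρ₁,…,ρ_m) = F̊(−c₁/c₀, c₂/c₀, …, (−1)^n c_n/c₀); in particular F(ρ₁,…,ρ_m) ∈ K. -/
open MvPolynomial Finset

/-!
Listing each root `ρⱼ` of `P` as often as its multiplicity gives the point `ρ ∘ asg ∈ Kⁿ`.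
Evaluating the lift `F̂` there is evaluating `F` at `ρ`, while by Vieta's formulas the
elementary symmetric polynomials take the values `(-1)ᵏ cₖ / c₀` there; substituting these into
`F̂ = F̊(e₁, …, eₙ)` gives the claim.
-/

theorem MvPolynomial.eval_aeval {R σ τ : Type*} [CommSemiring R] (g : σ → MvPolynomial τ R)
    (v : τ → R) (p : MvPolynomial σ R) :
    eval v (aeval g p) = eval (fun i => eval v (g i)) p :=
  eval₂Hom_bind₁ _ _ _ _

theorem Fintype.prod_pow_card_fiber {ι κ M : Type*} [Fintype ι] [Fintype κ] [DecidableEq κ]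
    [CommMonoid M] (g : ι → κ) (f : κ → M) :
    ∏ j, f j ^ #{i | g i = j} = ∏ i, f (g i) := by
  rw [← Fintype.prod_fiberwise' g f]
  refine Finset.prod_congr rfl fun j _ => ?_
  rw [Finset.prod_const, Finset.card_univ, Fintype.card_subtype]

theorem Polynomial.coeff_sum_C_mul_X_pow_sub {R : Type*} [Semiring R] (c : ℕ → R) {n k : ℕ}
    (hk : k ≤ n) :
    (∑ i ∈ range (n + 1), Polynomial.C (c i) * Polynomial.X ^ (n - i)).coeff (n - k) = c k := by
  rw [Polynomial.finsetSum_coeff, Finset.sum_eq_single_of_mem k (mem_range.mpr (by omega))]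
  · simp
  · intro i hi hik
    rw [Polynomial.coeff_C_mul_X_pow, if_neg (by rw [mem_range] at hi; omega)]

theorem Polynomial.coeff_C_mul_prod_X_sub_C {R σ : Type*} [CommRing R] [Fintype σ] (a : R)
    (f : σ → R) {k : ℕ} (hk : k ≤ Fintype.card σ) :
    (Polynomial.C a * ∏ i, (Polynomial.X - Polynomial.C (f i))).coeff (Fintype.card σ - k)
      = a * ((-1) ^ k * MvPolynomial.eval f (esymm σ R k)) := by
  have hcard : Multiset.card (univ.val.map f) = Fintype.card σ := by simp
  have hprod : ∏ i, (Polynomial.X - Polynomial.C (f i))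
      = ((univ.val.map f).map fun t => Polynomial.X - Polynomial.C t).prod := by
    rw [Multiset.map_map]; rfl
  rw [Polynomial.coeff_C_mul, hprod, Multiset.prod_X_sub_C_coeff _ (by omega), hcard,
    Nat.sub_sub_self hk, ← aeval_esymm_eq_multiset_esymm σ R]
  rfl

theorem MvPolynomial.eval_esymm_eq_of_sum_eq_C_mul_prod {K σ : Type*} [Field K] [Fintype σ]
    (f : σ → K) (c : ℕ → K) (hc0 : c 0 ≠ 0)
    (hP : ∑ i ∈ range (Fintype.card σ + 1), Polynomial.C (c i) * Polynomial.X ^ (Fintype.card σ - i)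
      = Polynomial.C (c 0) * ∏ i, (Polynomial.X - Polynomial.C (f i)))
    {k : ℕ} (hk : k ≤ Fintype.card σ) :
    eval f (esymm σ K k) = (-1) ^ k * c k / c 0 := by
  have hcoeff := congrArg (Polynomial.coeff · (Fintype.card σ - k)) hP
  simp only [Polynomial.coeff_sum_C_mul_X_pow_sub c hk,
    Polynomial.coeff_C_mul_prod_X_sub_C _ _ hk] at hcoeff
  have hsq : ((-1 : K) ^ k) ^ 2 = 1 := by rw [← pow_mul, pow_mul', neg_one_sq, one_pow]
  rw [eq_div_iff hc0, hcoeff]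
  linear_combination (-(c 0 * eval f (esymm σ K k))) * hsq

theorem stmt0_general {K : Type*} [Field K] (n m : ℕ)
    (μ : Fin m → ℕ)
    (asg : Fin n → Fin m)
    (hasg : ∀ j, (Finset.univ.filter (fun i => asg i = j)).card = μ j)
    (F : MvPolynomial (Fin m) K) (Fhat Fgist : MvPolynomial (Fin n) K)
    (hlift : MvPolynomial.aeval (fun i => (X (asg i) : MvPolynomial (Fin m) K)) Fhat = F)
    (hgist : MvPolynomial.aeval
      (fun i : Fin n => MvPolynomial.esymm (Fin n) K ((i : ℕ) + 1)) Fgist = Fhat)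
    (c : ℕ → K) (hc0 : c 0 ≠ 0) (ρ : Fin m → K)
    (P : Polynomial K)
    (hP : P = ∑ i ∈ Finset.range (n + 1), Polynomial.C (c i) * Polynomial.X ^ (n - i))
    (hroots : P = Polynomial.C (c 0) * ∏ j, (Polynomial.X - Polynomial.C (ρ j)) ^ (μ j)) :
    MvPolynomial.eval ρ F
      = MvPolynomial.eval
          (fun k : Fin n => (-1 : K) ^ ((k : ℕ) + 1) * c ((k : ℕ) + 1) / c 0) Fgist := by
  have hroots' : ∑ i ∈ range (Fintype.card (Fin n) + 1),
        Polynomial.C (c i) * Polynomial.X ^ (Fintype.card (Fin n) - i)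
      = Polynomial.C (c 0) * ∏ i, (Polynomial.X - Polynomial.C (ρ (asg i))) := by
    simp_rw [Fintype.card_fin, ← hP, hroots, ← hasg]
    rw [Fintype.prod_pow_card_fiber asg fun j => Polynomial.X - Polynomial.C (ρ j)]
  rw [← hlift, ← hgist, eval_aeval, eval_aeval]
  simp only [eval_X]
  congr 2 with k
  exact eval_esymm_eq_of_sum_eq_C_mul_prod _ c hc0 hroots' (by simp)

/-- If `F ∈ K[r₁,…,r_m]` is `μ`-symmetric with `μ`-gist `F̊ ∈ K[z₁,…,z_n]`,
and `P(x) = Σ_{i=0}^n c_i x^(n-i)` has `m` distinct roots `ρ₁,…,ρ_m` with multiplicities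
`μ₁,…,μ_m`, then `F(ρ) = F̊(-c₁/c₀, c₂/c₀, …, (-1)^n c_n / c₀)`. -/
theorem stmt0 {K : Type*} [Field K] [CharZero K] (n m : ℕ)
    (μ : Fin m → ℕ) (hμ : ∀ j, 1 ≤ μ j) (hsum : ∑ j, μ j = n)
    (asg : Fin n → Fin m) (hmono : Monotone asg)
    (hasg : ∀ j, (Finset.univ.filter (fun i => asg i = j)).card = μ j)
    (F : MvPolynomial (Fin m) K) (Fhat Fgist : MvPolynomial (Fin n) K)
    (hsym : Fhat.IsSymmetric)
    (hlift : MvPolynomial.aeval (fun i => (X (asg i) : MvPolynomial (Fin m) K)) Fhat = F)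
    (hgist : MvPolynomial.aeval
      (fun i : Fin n => MvPolynomial.esymm (Fin n) K ((i : ℕ) + 1)) Fgist = Fhat)
    (c : ℕ → K) (hc0 : c 0 ≠ 0) (ρ : Fin m → K) (hρ : Function.Injective ρ)
    (P : Polynomial K)
    (hP : P = ∑ i ∈ Finset.range (n + 1), Polynomial.C (c i) * Polynomial.X ^ (n - i))
    (hroots : P = Polynomial.C (c 0) * ∏ j, (Polynomial.X - Polynomial.C (ρ j)) ^ (μ j)) :
    MvPolynomial.eval ρ F
      = MvPolynomial.eval
          (fun k : Fin n => (-1 : K) ^ ((k : ℕ) + 1) * c ((k : ℕ) + 1) / c 0) Fgist :=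
  stmt0_general n m μ asg hasg F Fhat Fgist hlift hgist c hc0 ρ P hP hroots
end

section
/- The polynomial Δ = ∏_{1≤i<j≤m} (r_i − r_j)² is μ-symmetric for every partition μ = (μ₁,…,μ_m) of n with m parts; a μ-lift is (1/∏_{i=1}^m μ_i) · S^n_{n−m}, where S^n_{n−m} is the (n−m)-th subdiscriminant in n variables. Equivalently, σ_μ(S^n_{n−m}) = (∏_{i=1}^m μ_i) · Δ. -/
/-!
Write `S^n_{n-m} = Σ_{|I| = m} D(I)` with `D(I) = ∏_{i<j ∈ I} (x_i − x_j)²`. A permutation of the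
variables maps `D(I)` to `D(e I)`, so it only permutes the summands. Under `σ_μ` the summand `D(I)`
becomes `∏_{i<j ∈ I} (r_{asg i} − r_{asg j})²`: it vanishes unless `asg` is injective on `I`, and
then `asg` maps `I` onto all `m` indices, so the summand is `Δ`. The sets `I` on which `asg` is
injective are the transversals of the fibres of `asg`, and there are `∏ μ_j` of them.
-/

open MvPolynomial

/-- The `(n-m)`-th subdiscriminant in `n` variables:
`S^n_{n-m} = Σ_{|I| = m} ∏_{i<j ∈ I} (x_i − x_j)²`. -/
noncomputable def subdisc (K : Type*) [Field K] (n m : ℕ) : MvPolynomial (Fin n) K :=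
  ∑ I ∈ Finset.powersetCard m (Finset.univ : Finset (Fin n)),
    ∏ p ∈ I.offDiag.filter (fun p => p.1 < p.2), (X p.1 - X p.2) ^ 2

section

open Finset

theorem Finset.prod_offDiag_lt_comp_of_injOn {ι κ M : Type*} [LinearOrder ι] [LinearOrder κ]
    [CommMonoid M] {g : κ → κ → M} (hg : ∀ a b, g a b = g b a) {f : ι → κ}
    {s : Finset ι} (hf : Set.InjOn f s) :
    ∏ p ∈ s.offDiag with p.1 < p.2, g (f p.1) (f p.2) =
      ∏ q ∈ (s.image f).offDiag with q.1 < q.2, g q.1 q.2 := by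
  refine prod_nbij (fun p => (min (f p.1) (f p.2), max (f p.1) (f p.2))) ?_ ?_ ?_ ?_
  · rintro ⟨a, b⟩ hab
    simp only [mem_filter, mem_offDiag, mem_image] at hab ⊢
    obtain ⟨⟨ha, hb, hne⟩, -⟩ := hab
    have := hf.ne ha hb hne
    grind
  · rintro ⟨a, b⟩ hab ⟨c, d⟩ hcd h
    simp only [coe_filter, mem_offDiag, Set.mem_ofPred_eq, Prod.mk.injEq] at hab hcd h ⊢
    obtain ⟨⟨ha, hb, -⟩, hlt⟩ := hab
    obtain ⟨⟨hc, hd, -⟩, hlt'⟩ := hcd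
    have : (f a = f c ∧ f b = f d) ∨ (f a = f d ∧ f b = f c) := by grind
    rcases this with ⟨hac, hbd⟩ | ⟨had, hbc⟩
    · exact ⟨hf ha hc hac, hf hb hd hbd⟩
    · grind [hf ha hd had, hf hb hc hbc]
  · rintro ⟨_, _⟩ h
    simp only [coe_filter, mem_offDiag, Set.mem_ofPred_eq, mem_image] at h
    obtain ⟨⟨⟨u, hu, rfl⟩, ⟨v, hv, rfl⟩, hne⟩, hlt⟩ := h
    rcases lt_trichotomy u v with h | rfl | h
    · exact ⟨(u, v), by simp [hu, hv, h, h.ne], by simp [hlt.le]⟩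
    · exact absurd rfl hne
    · exact ⟨(v, u), by simp [hu, hv, h, h.ne], by simp [hlt.le]⟩
  · rintro ⟨a, b⟩ -
    rcases le_total (f a) (f b) with h | h <;> simp [h, hg]

open scoped Classical in
theorem Finset.card_powersetCard_filter_injOn {α β : Type*} [Fintype α] [DecidableEq α]
    [Fintype β] [DecidableEq β] (f : α → β) :
    #((powersetCard (Fintype.card β) univ).filter fun I : Finset α => Set.InjOn f I) =
      ∏ b, #{a | f a = b} := by
  -- such sets `I` are exactly the ranges of the sections `g` of `f`
  rw [← Fintype.card_piFinset]
  refine (card_nbij (fun g : β → α => univ.image g) ?_ ?_ ?_).symm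
  · intro g hg
    simp only [mem_coe, Fintype.mem_piFinset, mem_filter_univ] at hg
    have hinj : Function.Injective g := fun b b' h => by rw [← hg b, ← hg b', h]
    simp only [mem_coe, mem_filter, mem_powersetCard_univ, card_image_of_injective _ hinj,
      card_univ, coe_image, coe_univ, Set.image_univ, true_and]
    rintro _ ⟨b, rfl⟩ _ ⟨b', rfl⟩ h
    rw [hg b, hg b'] at h
    rw [h]
  · intro g hg g' hg' h
    simp only [mem_coe, Fintype.mem_piFinset, mem_filter_univ] at hg hg' h
    funext b
    obtain ⟨b', -, hb'⟩ := mem_image.mp (h ▸ mem_image_of_mem g (mem_univ b))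
    rw [← hb', ← hg b, ← hb', hg' b']
  · intro I hI
    simp only [coe_filter, mem_powersetCard_univ, Set.mem_ofPred_eq] at hI
    obtain ⟨hcard, hinj⟩ := hI
    have himage : I.image f = univ := eq_univ_of_card _ (by rw [card_image_of_injOn hinj, hcard])
    choose g hgI hg using fun b => mem_image.mp (himage ▸ mem_univ b)
    have hginj : Function.Injective g := fun b b' h => by rw [← hg b, ← hg b', h]
    refine ⟨g, by simpa using hg, eq_of_subset_of_card_le ?_ ?_⟩
    · simpa [subset_iff] using hgI
    · rw [card_image_of_injective _ hginj, hcard, card_univ]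

section discrOn

variable {ι R : Type*} [LinearOrder ι] [CommRing R]

def discrOn (x : ι → R) (s : Finset ι) : R :=
  ∏ p ∈ s.offDiag with p.1 < p.2, (x p.1 - x p.2) ^ 2

theorem map_discrOn {S F : Type*} [CommRing S] [FunLike F R S] [RingHomClass F R S] (φ : F)
    (x : ι → R) (s : Finset ι) : φ (discrOn x s) = discrOn (φ ∘ x) s := by
  simp [discrOn]

theorem discrOn_comp_of_injOn {κ : Type*} [LinearOrder κ] (x : κ → R) {f : ι → κ}
    {s : Finset ι} (hf : Set.InjOn f s) :
    discrOn (x ∘ f) s = discrOn x (s.image f) :=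
  prod_offDiag_lt_comp_of_injOn (g := fun a b => (x a - x b) ^ 2) (fun _ _ => by ring) hf

theorem discrOn_comp_of_not_injOn {κ : Type*} (x : κ → R) {f : ι → κ} {s : Finset ι}
    (hf : ¬ Set.InjOn f s) : discrOn (x ∘ f) s = 0 := by
  obtain ⟨a, ha, b, hb, hab, hne⟩ : ∃ a ∈ s, ∃ b ∈ s, f a = f b ∧ a ≠ b := by
    simpa [Set.InjOn] using hf
  rcases hne.lt_or_gt with h | h
  · exact prod_eq_zero (i := (a, b)) (by simp [ha, hb, h, h.ne]) (by simp [hab])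
  · exact prod_eq_zero (i := (b, a)) (by simp [ha, hb, h, h.ne]) (by simp [hab])

theorem discrOn_univ [Fintype ι] (x : ι → R) :
    discrOn x univ = ∏ p ∈ (univ : Finset (ι × ι)) with p.1 < p.2, (x p.1 - x p.2) ^ 2 := by
  unfold discrOn
  congr 1
  ext p
  simpa using ne_of_lt

end discrOn

variable {K : Type*} [Field K]

theorem subdisc_eq_sum_discrOn (n m : ℕ) :
    subdisc K n m = ∑ I ∈ powersetCard m univ, discrOn X I :=
  rfl

theorem subdisc_isSymmetric (n m : ℕ) : (subdisc K n m).IsSymmetric := by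
  intro e
  simp only [subdisc_eq_sum_discrOn, map_sum, map_discrOn]
  have hX : rename (R := K) e ∘ X = X ∘ e := funext (rename_X e)
  simp only [hX, discrOn_comp_of_injOn _ e.injective.injOn]
  exact sum_equiv (Equiv.finsetCongr e) (by simp) (by simp [map_eq_image])

theorem aeval_subdisc {n m : ℕ} (f : Fin n → Fin m) :
    aeval (fun i => (X (f i) : MvPolynomial (Fin m) K)) (subdisc K n m) =
      (∏ j, (#{i | f i = j} : K)) • discrOn X univ := by
  classical
  have hX : aeval (R := K) (fun i => (X (f i) : MvPolynomial (Fin m) K)) ∘ X = X ∘ f :=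
    funext (aeval_X _)
  have hterm : ∀ I ∈ powersetCard m univ,
      discrOn (X ∘ f : _ → MvPolynomial (Fin m) K) I =
        if Set.InjOn f I then discrOn X univ else 0 := by
    intro I hI
    split_ifs with hinj
    · rw [discrOn_comp_of_injOn _ hinj, eq_univ_of_card (I.image f)
        (by rw [card_image_of_injOn hinj, mem_powersetCard_univ.mp hI, Fintype.card_fin])]
    · exact discrOn_comp_of_not_injOn _ hinj
  have hcard := card_powersetCard_filter_injOn f
  rw [Fintype.card_fin] at hcard
  rw [subdisc_eq_sum_discrOn, map_sum]
  simp only [map_discrOn, hX]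
  rw [sum_congr rfl hterm, ← sum_filter, sum_const, hcard, ← Nat.cast_smul_eq_nsmul K,
    Nat.cast_prod]

end

theorem stmt8_general {K : Type*} [Field K] (n m : ℕ)
    (μ : Fin m → ℕ)
    (asg : Fin n → Fin m)
    (hasg : ∀ j, (Finset.univ.filter (fun i => asg i = j)).card = μ j) :
    (subdisc K n m).IsSymmetric ∧
    MvPolynomial.aeval (R := K) (fun i => (X (asg i) : MvPolynomial (Fin m) K)) (subdisc K n m)
      = (∏ j, (μ j : K)) •
          ∏ p ∈ (Finset.univ : Finset (Fin m × Fin m)).filter (fun p => p.1 < p.2),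
            (X p.1 - X p.2) ^ 2 :=
  ⟨subdisc_isSymmetric n m, by simp only [aeval_subdisc, hasg, discrOn_univ]⟩

/-- `Δ = ∏_{i<j} (r_i − r_j)²` is `μ`-symmetric for every partition
`μ = (μ₁,…,μ_m)` of `n`, with `μ`-lift `(1/∏ μ_i) · S^n_{n−m}`; equivalently
`S^n_{n-m}` is symmetric and `σ_μ(S^n_{n−m}) = (∏ μ_i) · Δ`. -/
theorem stmt8 {K : Type*} [Field K] [CharZero K] (n m : ℕ)
    (μ : Fin m → ℕ) (hμ : ∀ j, 1 ≤ μ j) (hsum : ∑ j, μ j = n)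
    (asg : Fin n → Fin m) (hmono : Monotone asg)
    (hasg : ∀ j, (Finset.univ.filter (fun i => asg i = j)).card = μ j) :
    (subdisc K n m).IsSymmetric ∧
    MvPolynomial.aeval (R := K) (fun i => (X (asg i) : MvPolynomial (Fin m) K)) (subdisc K n m)
      = (∏ j, (μ j : K)) •
          ∏ p ∈ (Finset.univ : Finset (Fin m × Fin m)).filter (fun p => p.1 < p.2),
            (X p.1 - X p.2) ^ 2 :=
  stmt8_general n m μ asg hasg
end

section
/- Let μ = (μ₁,μ₂) with n = μ₁ + μ₂ even. Then D⁺(μ) = (r₁ − r₂)^n satisfies D⁺(μ) = F̊_n(ē₁, ē₂) where F̊_n(z₁,z₂) = (((n−1)z₁² − 2n z₂)/(μ₁μ₂))^{n/2} and ē_i = σ_μ(e_i). In particular D⁺(μ) is μ-symmetric. -/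
open MvPolynomial

/-- Canonical specialization for a two-part partition `μ = (μ₁,μ₂)`:
`x₁,…,x_{μ₁} ↦ r₁`, `x_{μ₁+1},…,x_n ↦ r₂`. -/
noncomputable def sigma2 (K : Type*) [Field K] (μ1 μ2 : ℕ) :
    MvPolynomial (Fin (μ1 + μ2)) K →ₐ[K] MvPolynomial (Fin 2) K :=
  MvPolynomial.aeval (fun i : Fin (μ1 + μ2) => if (i : ℕ) < μ1 then X 0 else X 1)

/-- `ē_k = σ_μ(e_k)` for the two-part partition `μ = (μ₁,μ₂)`. -/
noncomputable def ebar (K : Type*) [Field K] (μ1 μ2 k : ℕ) : MvPolynomial (Fin 2) K :=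
  sigma2 K μ1 μ2 (esymm (Fin (μ1 + μ2)) K k)

/-! Newton's identity `2 e₂ = e₁² − p₂` and `σ_μ(p_k) = μ₁ r₁ᵏ + μ₂ r₂ᵏ` give
`(n − 1) ē₁² − 2n ē₂ = n p̄₂ − ē₁² = (μ₁ + μ₂)(μ₁ r₁² + μ₂ r₂²) − (μ₁ r₁ + μ₂ r₂)²
  = μ₁ μ₂ (r₁ − r₂)²`,
so the base of `F̊_n(ē₁, ē₂)` is `(r₁ − r₂)²`. The same expression in `e₁, e₂` is a symmetric
polynomial specializing to `D⁺(μ)`. -/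

theorem MvPolynomial.IsSymmetric.pow {σ R : Type*} [CommSemiring R] {φ : MvPolynomial σ R}
    (h : φ.IsSymmetric) (n : ℕ) : (φ ^ n).IsSymmetric :=
  fun e => by rw [map_pow, h e]

theorem MvPolynomial.two_mul_esymm_two (σ R : Type*) [Fintype σ] [CommRing R] :
    2 * esymm σ R 2 = esymm σ R 1 ^ 2 - psum σ R 2 := by
  have h := psum_eq_mul_esymm_sub_sum σ R 2 two_pos
  simp [Finset.sum_filter, Finset.Nat.sum_antidiagonal_succ, psum_one, ← esymm_one] at h
  linear_combination h

section Specialization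

variable (K : Type*) [Field K] (μ1 μ2 : ℕ)

theorem sigma2_C (a : K) : sigma2 K μ1 μ2 (C a) = C a := by
  simp [sigma2, algebraMap_eq]

theorem sigma2_psum (k : ℕ) :
    sigma2 K μ1 μ2 (psum (Fin (μ1 + μ2)) K k) = C (μ1 : K) * X 0 ^ k + C (μ2 : K) * X 1 ^ k := by
  simp [sigma2, psum, Fin.sum_univ_add, map_natCast, nsmul_eq_mul]

theorem ebar_one : ebar K μ1 μ2 1 = C (μ1 : K) * X 0 + C (μ2 : K) * X 1 := by
  simpa [ebar, esymm_one, ← psum_one] using sigma2_psum K μ1 μ2 1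

theorem two_mul_ebar_two :
    2 * ebar K μ1 μ2 2 = ebar K μ1 μ2 1 ^ 2 - (C (μ1 : K) * X 0 ^ 2 + C (μ2 : K) * X 1 ^ 2) := by
  simpa [ebar, sigma2_psum, map_ofNat] using
    congrArg (sigma2 K μ1 μ2) (two_mul_esymm_two (Fin (μ1 + μ2)) K)

theorem ebar_discriminant :
    C (((μ1 + μ2 : ℕ) : K) - 1) * ebar K μ1 μ2 1 ^ 2 - C (2 * ((μ1 + μ2 : ℕ) : K)) * ebar K μ1 μ2 2
      = C ((μ1 : K) * μ2) * (X 0 - X 1) ^ 2 := by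
  have h2 := two_mul_ebar_two K μ1 μ2
  rw [ebar_one] at h2 ⊢
  simp only [Nat.cast_add, C_add, C_sub, C_mul, C_1, map_ofNat]
  linear_combination (-C (μ1 : K) - C (μ2 : K)) * h2

theorem pow_ebar_discriminant_eq (hμ : (μ1 : K) * μ2 ≠ 0) (hn : Even (μ1 + μ2)) :
    (C (((μ1 : K) * μ2)⁻¹) * (C (((μ1 + μ2 : ℕ) : K) - 1) * ebar K μ1 μ2 1 ^ 2
        - C (2 * ((μ1 + μ2 : ℕ) : K)) * ebar K μ1 μ2 2)) ^ ((μ1 + μ2) / 2)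
      = (X 0 - X 1) ^ (μ1 + μ2) := by
  rw [ebar_discriminant, ← mul_assoc, ← C_mul, inv_mul_cancel₀ hμ, C_1, one_mul, ← pow_mul,
    Nat.mul_div_cancel' hn.two_dvd]

end Specialization

/-- For `μ = (μ₁,μ₂)` with `n = μ₁ + μ₂` even,
`D⁺(μ) = (r₁ − r₂)^n = F̊_n(ē₁, ē₂)` where
`F̊_n(z₁,z₂) = (((n−1)z₁² − 2n z₂)/(μ₁μ₂))^{n/2}`; in particular `D⁺(μ)` is
`μ`-symmetric. -/
theorem stmt10 {K : Type*} [Field K] [CharZero K] (μ1 μ2 : ℕ) (h1 : 1 ≤ μ1) (h2 : 1 ≤ μ2)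
    (hn : Even (μ1 + μ2)) :
    (C (((μ1 : K) * μ2)⁻¹) *
          (C (((μ1 + μ2 : ℕ) : K) - 1) * ebar K μ1 μ2 1 ^ 2
            - C (2 * ((μ1 + μ2 : ℕ) : K)) * ebar K μ1 μ2 2)) ^ ((μ1 + μ2) / 2)
        = ((X 0 : MvPolynomial (Fin 2) K) - X 1) ^ (μ1 + μ2) ∧
    ∃ Fhat : MvPolynomial (Fin (μ1 + μ2)) K, Fhat.IsSymmetric ∧
      sigma2 K μ1 μ2 Fhat = ((X 0 : MvPolynomial (Fin 2) K) - X 1) ^ (μ1 + μ2) := by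
  have hμ : (μ1 : K) * μ2 ≠ 0 := mul_ne_zero (by norm_cast; omega) (by norm_cast; omega)
  have hD := pow_ebar_discriminant_eq K μ1 μ2 hμ hn
  refine ⟨hD, (C (((μ1 : K) * μ2)⁻¹) * (C (((μ1 + μ2 : ℕ) : K) - 1) * esymm _ K 1 ^ 2
      - C (2 * ((μ1 + μ2 : ℕ) : K)) * esymm _ K 2)) ^ ((μ1 + μ2) / 2), ?_,
    by simpa only [map_pow, map_mul, map_sub, sigma2_C, ebar] using hD⟩
  exact ((IsSymmetric.C _).mul (((IsSymmetric.C _).mul ((esymm_isSymmetric _ K 1).pow 2)).sub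
    ((IsSymmetric.C _).mul (esymm_isSymmetric _ K 2)))).pow _
end

section
/- Let μ = (μ₁,μ₂) with μ₁ ≠ μ₂ and n = μ₁ + μ₂. Then (r₁ − r₂)³ = k₁ē₁³ + k₂ē₁ē₂ + k₃ē₃, where k₁ = −(n−1)(n−2)/d, k₂ = 3n(n−2)/d, k₃ = −3n²/d, and d = μ₁μ₂(μ₁ − μ₂). -/
open MvPolynomial

open Finset in
theorem newton2' (σ R : Type*) [Fintype σ] [CommRing R] :
    (2:MvPolynomial σ R) * esymm σ R 2 = esymm σ R 1 * psum σ R 1 - psum σ R 2 := by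
  have h := MvPolynomial.mul_esymm_eq_sum σ R 2
  rw [show filter (fun a => a.1 < 2) (antidiagonal 2) = ({(0,2),(1,1)} : Finset (ℕ×ℕ)) by decide] at h
  simp [Finset.sum_insert, esymm_zero] at h
  rw [esymm_one, psum_one]
  linear_combination h

open Finset in
theorem newton3' (σ R : Type*) [Fintype σ] [CommRing R] :
    (3:MvPolynomial σ R) * esymm σ R 3
      = psum σ R 3 - esymm σ R 1 * psum σ R 2 + esymm σ R 2 * psum σ R 1 := by
  have h := MvPolynomial.mul_esymm_eq_sum σ R 3
  rw [show filter (fun a => a.1 < 3) (antidiagonal 3) = ({(0,3),(1,2),(2,1)} : Finset (ℕ×ℕ)) by decide] at h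
  simp [Finset.sum_insert, esymm_zero] at h
  rw [esymm_one, psum_one]
  linear_combination h

theorem psum_image' (K : Type*) [Field K] (μ1 μ2 k : ℕ) :
    sigma2 K μ1 μ2 (psum (Fin (μ1 + μ2)) K k)
      = (μ1 : MvPolynomial (Fin 2) K) * X 0 ^ k + (μ2 : MvPolynomial (Fin 2) K) * X 1 ^ k := by
  rw [psum, map_sum]
  simp only [map_pow, sigma2, aeval_X]
  rw [Fin.sum_univ_add]
  simp [Fin.coe_castAdd, Fin.is_lt, mul_comm]

/-- For `μ = (μ₁,μ₂)` with `μ₁ ≠ μ₂` and `n = μ₁ + μ₂`: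
`(r₁ − r₂)³ = k₁ē₁³ + k₂ē₁ē₂ + k₃ē₃` with `k₁ = −(n−1)(n−2)/d`, `k₂ = 3n(n−2)/d`,
`k₃ = −3n²/d`, `d = μ₁μ₂(μ₁ − μ₂)`. -/
theorem stmt11 {K : Type*} [Field K] [CharZero K] (μ1 μ2 : ℕ) (h1 : 1 ≤ μ1) (h2 : 1 ≤ μ2)
    (hne : μ1 ≠ μ2) :
    ((X 0 : MvPolynomial (Fin 2) K) - X 1) ^ 3
      = C ((-((((μ1 + μ2 : ℕ) : K) - 1) * (((μ1 + μ2 : ℕ) : K) - 2)))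
            / ((μ1 : K) * μ2 * ((μ1 : K) - μ2))) * ebar K μ1 μ2 1 ^ 3
        + C ((3 * ((μ1 + μ2 : ℕ) : K) * (((μ1 + μ2 : ℕ) : K) - 2))
            / ((μ1 : K) * μ2 * ((μ1 : K) - μ2))) * (ebar K μ1 μ2 1 * ebar K μ1 μ2 2)
        + C ((-(3 * ((μ1 + μ2 : ℕ) : K) ^ 2))
            / ((μ1 : K) * μ2 * ((μ1 : K) - μ2))) * ebar K μ1 μ2 3 := by
  have e1 : ebar K μ1 μ2 1
      = (μ1 : MvPolynomial (Fin 2) K) * X 0 + (μ2 : MvPolynomial (Fin 2) K) * X 1 := by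
    have := psum_image' K μ1 μ2 1
    simpa [ebar, esymm_one, psum_one] using this
  have H2 : (2:MvPolynomial (Fin 2) K) * ebar K μ1 μ2 2
      = ebar K μ1 μ2 1 * sigma2 K μ1 μ2 (psum (Fin (μ1 + μ2)) K 1)
        - sigma2 K μ1 μ2 (psum (Fin (μ1 + μ2)) K 2) := by
    have := congrArg (sigma2 K μ1 μ2) (newton2' (Fin (μ1 + μ2)) K)
    simpa [ebar, map_mul, map_sub, map_ofNat] using this
  have H3 : (3:MvPolynomial (Fin 2) K) * ebar K μ1 μ2 3
      = sigma2 K μ1 μ2 (psum (Fin (μ1 + μ2)) K 3)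
        - ebar K μ1 μ2 1 * sigma2 K μ1 μ2 (psum (Fin (μ1 + μ2)) K 2)
        + ebar K μ1 μ2 2 * sigma2 K μ1 μ2 (psum (Fin (μ1 + μ2)) K 1) := by
    have := congrArg (sigma2 K μ1 μ2) (newton3' (Fin (μ1 + μ2)) K)
    simpa [ebar, map_mul, map_sub, map_add, map_ofNat] using this
  simp only [psum_image'] at H2 H3
  have ha : (μ1 : K) ≠ 0 := Nat.cast_ne_zero.mpr (by omega)
  have hb : (μ2 : K) ≠ 0 := Nat.cast_ne_zero.mpr (by omega)
  have hab : (μ1 : K) - μ2 ≠ 0 := sub_ne_zero.mpr (fun h => hne (Nat.cast_injective h))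
  apply MvPolynomial.funext
  intro x
  have hv1 := congrArg (eval x) e1
  have hv2 := congrArg (eval x) H2
  have hv3 := congrArg (eval x) H3
  simp only [map_mul, map_add, map_sub, map_pow, map_ofNat, eval_X, map_natCast] at hv1 hv2 hv3
  simp only [map_mul, map_add, map_sub, map_pow, eval_X, eval_C, map_natCast]
  rw [hv1] at hv2 hv3 ⊢
  set E2 := eval x (ebar K μ1 μ2 2) with hE2
  set E3 := eval x (ebar K μ1 μ2 3) with hE3
  have hE2' : E2 = (((μ1:K) * x 0 + μ2 * x 1) ^ 2 - ((μ1:K) * x 0 ^ 2 + μ2 * x 1 ^ 2)) / 2 := by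
    field_simp
    linear_combination hv2
  have hE3' : E3 = (2 * ((μ1:K) * x 0 ^ 3 + μ2 * x 1 ^ 3)
      - 3 * ((μ1:K) * x 0 + μ2 * x 1) * ((μ1:K) * x 0 ^ 2 + μ2 * x 1 ^ 2)
      + ((μ1:K) * x 0 + μ2 * x 1) ^ 3) / 6 := by
    field_simp
    linear_combination 2 * hv3 + ((μ1:K) * x 0 + μ2 * x 1) * hv2
  rw [hE3', hE2']
  have hD : ((μ1:K) * μ2 * ((μ1:K) - μ2)) ≠ 0 := mul_ne_zero (mul_ne_zero ha hb) hab
  have hu := mul_inv_cancel₀ hD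
  push_cast
  linear_combination (-(x 0 - x 1) ^ 3) * hu
end
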